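/- Universal approximation for quaternion-valued MLP networks with split activation: Let ψ : ℝ → ℝ be a Tauber–Wiener function such that ψ(t) → 0 as t → −∞ or ψ(t) → 0 as t → +∞, and let ψ_ℍ : ℍ → ℍ be the split activation ψ_ℍ(ξ₀ + ξ₁ i + ξ₂ j + ξ₃ k) = ψ(ξ₀) + ψ(ξ₁) i + ψ(ξ₂) j + ψ(ξ₃) k on the real quaternions ℍ. Then for every N ≥ 1, every compact set K ⊆ ℍᴺ, every continuous function f : ℍᴺ → ℍ, and every ε > 0, there exist M ∈ ℕ and quaternion parameters α_i, b_i ∈ ℍ and w_{ij} ∈ ℍ (1 ≤ i ≤ M, 1 ≤ j ≤ N) such that ‖ Σ_{i=1}^M α_i · ψ_ℍ( Σ_{j=1}^N w_{ij} · x_j + b_i ) − f(x) ‖ ≤ ε for all x = (x₁,…,x_N) ∈ K. -/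

import Mathlib

open Filter

/-- `ψ` is a Tauber–Wiener function: every continuous real function can be uniformly
approximated on every closed interval by finite linear combinations of the form
`t ↦ ∑ i, α i * ψ (w i * t + θ i)`. -/
def IsTauberWiener (ψ : ℝ → ℝ) : Prop :=
  ∀ f : ℝ → ℝ, Continuous f → ∀ a b : ℝ, ∀ ε : ℝ, 0 < ε →
    ∃ M : ℕ, ∃ α w θ : Fin M → ℝ,
      ∀ t ∈ Set.Icc a b, |f t - ∑ i, α i * ψ (w i * t + θ i)| ≤ ε

/-!
By Stone–Weierstrass, linear combinations of `x ↦ exp (L x)`, `L` a continuous linear functional,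
are uniformly dense on compact sets; approximating `exp` by the Tauber–Wiener property on the
bounded range of each `L` shows that the real networks `x ↦ ∑ a * ψ (L x + θ)` are dense as well.
A real neuron times a quaternion, `ψ (L x + θ) • e`, is in turn approximated by the single
quaternion neuron `e * ψ_ℍ (∑ j, w j * x j + b)`: the weights are chosen with
`re (∑ j, w j * x j) = L x`, and the imaginary parts of the bias push the three imaginary
components of the argument into a region where `ψ` is uniformly small. Expanding `f` in the
basis `1, i, j, k` finishes the proof.
-/

open Set Submodule
open scoped Quaternion

theorem mul_div_add_one_le {a ε : ℝ} (ha : 0 ≤ a) (hε : 0 ≤ ε) : a * (ε / (a + 1)) ≤ ε := by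
  rw [mul_div_left_comm]
  exact mul_le_of_le_one_right hε ((div_le_one (by positivity)).2 (by linarith))

namespace Submodule

variable {X E F : Type*} [NormedAddCommGroup E] [NormedSpace ℝ E]
  [NormedAddCommGroup F] [NormedSpace ℝ F]

def uniformClosureOn (S : Submodule ℝ (X → E)) (K : Set X) : Submodule ℝ (X → E) where
  carrier := {f | ∀ ε > 0, ∃ g ∈ S, ∀ x ∈ K, ‖g x - f x‖ ≤ ε}
  zero_mem' ε hε := ⟨0, S.zero_mem, fun x _ => by simpa using hε.le⟩
  add_mem' {f₁ f₂} hf₁ hf₂ ε hε := by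
    obtain ⟨g₁, hg₁, h₁⟩ := hf₁ (ε / 2) (half_pos hε)
    obtain ⟨g₂, hg₂, h₂⟩ := hf₂ (ε / 2) (half_pos hε)
    refine ⟨g₁ + g₂, S.add_mem hg₁ hg₂, fun x hx => ?_⟩
    calc ‖(g₁ + g₂) x - (f₁ + f₂) x‖ = ‖(g₁ x - f₁ x) + (g₂ x - f₂ x)‖ := by
          rw [Pi.add_apply, Pi.add_apply, add_sub_add_comm]
      _ ≤ ε / 2 + ε / 2 := (norm_add_le _ _).trans (add_le_add (h₁ x hx) (h₂ x hx))
      _ = ε := add_halves ε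
  smul_mem' c f hf ε hε := by
    obtain ⟨g, hg, hgf⟩ := hf (ε / (|c| + 1)) (by positivity)
    refine ⟨c • g, S.smul_mem c hg, fun x hx => ?_⟩
    calc ‖(c • g) x - (c • f) x‖ = |c| * ‖g x - f x‖ := by
          rw [Pi.smul_apply, Pi.smul_apply, ← smul_sub, norm_smul, Real.norm_eq_abs]
      _ ≤ |c| * (ε / (|c| + 1)) := by gcongr; exact hgf x hx
      _ ≤ ε := mul_div_add_one_le (abs_nonneg c) hε.le

variable {S T : Submodule ℝ (X → E)} {K : Set X}

theorem le_uniformClosureOn : S ≤ S.uniformClosureOn K :=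
  fun f hf ε hε => ⟨f, hf, fun x _ => by simpa using hε.le⟩

theorem uniformClosureOn_mono (h : S ≤ T) : S.uniformClosureOn K ≤ T.uniformClosureOn K :=
  fun _ hf ε hε => (hf ε hε).imp fun _ ⟨hg, hgf⟩ => ⟨h hg, hgf⟩

@[simp]
theorem uniformClosureOn_uniformClosureOn :
    (S.uniformClosureOn K).uniformClosureOn K = S.uniformClosureOn K := by
  refine le_antisymm (fun f hf ε hε => ?_) le_uniformClosureOn
  obtain ⟨h, hh, hhf⟩ := hf (ε / 2) (half_pos hε)
  obtain ⟨g, hg, hgh⟩ := hh (ε / 2) (half_pos hε)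
  refine ⟨g, hg, fun x hx => ?_⟩
  calc ‖g x - f x‖ ≤ ‖g x - h x‖ + ‖h x - f x‖ := norm_sub_le_norm_sub_add_norm_sub _ _ _
    _ ≤ ε / 2 + ε / 2 := add_le_add (hgh x hx) (hhf x hx)
    _ = ε := add_halves ε

theorem comp_mem_uniformClosureOn_map (A : E →L[ℝ] F) {f : X → E}
    (hf : f ∈ S.uniformClosureOn K) :
    A ∘ f ∈ (S.map ((A : E →ₗ[ℝ] F).compLeft X)).uniformClosureOn K := by
  intro ε hε
  obtain ⟨g, hg, hgf⟩ := hf (ε / (‖A‖ + 1)) (by positivity)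
  refine ⟨A ∘ g, mem_map_of_mem hg, fun x hx => ?_⟩
  calc ‖A (g x) - A (f x)‖ ≤ ‖A‖ * ‖g x - f x‖ := by rw [← map_sub]; exact A.le_opNorm _
    _ ≤ ‖A‖ * (ε / (‖A‖ + 1)) := by gcongr; exact hgf x hx
    _ ≤ ε := mul_div_add_one_le (norm_nonneg A) hε.le

theorem continuous_mem_of_forall_smul_mem [FiniteDimensional ℝ F] [TopologicalSpace X]
    {S : Submodule ℝ (X → F)} (hS : ∀ φ : X → ℝ, Continuous φ → ∀ v : F, (fun x => φ x • v) ∈ S)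
    {f : X → F} (hf : Continuous f) : f ∈ S := by
  let b := Module.finBasis ℝ F
  have hsum : f = ∑ i, fun x => b.repr (f x) i • b i := by
    ext x
    simp [b.sum_repr (f x)]
  rw [hsum]
  exact sum_mem fun i _ => hS _ ((b.coord i).continuous_of_finiteDimensional.comp hf) _

end Submodule

section RealNetworks

variable {E : Type*} [NormedAddCommGroup E] [NormedSpace ℝ E] {K : Set E}

theorem continuous_mem_uniformClosureOn_span_exp (hK : IsCompact K) {F : E → ℝ}
    (hF : Continuous F) :
    F ∈ (span ℝ (range fun (L : E →L[ℝ] ℝ) x => Real.exp (L x))).uniformClosureOn K := by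
  set p := span ℝ (range fun (L : E →L[ℝ] ℝ) x => Real.exp (L x))
  have one_mem : (1 : E → ℝ) ∈ p := subset_span ⟨0, by ext; simp⟩
  have mul_mem : ∀ g h : E → ℝ, g ∈ p → h ∈ p → g * h ∈ p := by
    intro g h hg hh
    have hgh := Submodule.mul_mem_mul hg hh
    rw [span_mul_span] at hgh
    refine span_le.2 ?_ hgh
    rintro _ ⟨_, ⟨L, rfl⟩, _, ⟨L', rfl⟩, rfl⟩
    exact subset_span ⟨L + L', by ext; simp [Real.exp_add]⟩
  let A : Subalgebra ℝ C(E, ℝ) :=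
    (p.toSubalgebra one_mem mul_mem).comap (ContinuousMap.coeFnAlgHom ℝ)
  have hA : A.SeparatesPoints := by
    intro x y hxy
    obtain ⟨L, hL⟩ := SeparatingDual.exists_separating_of_ne (R := ℝ) hxy
    refine ⟨_, ⟨⟨fun x => Real.exp (L x), by fun_prop⟩, subset_span ⟨L, rfl⟩, rfl⟩, ?_⟩
    simpa using hL
  intro ε hε
  obtain ⟨g, hg, hgF⟩ :=
    ContinuousMap.exists_mem_subalgebra_near_continuous_of_isCompact_of_separatesPoints hA
      ⟨F, hF⟩ hK hε
  exact ⟨g, hg, fun x hx => (hgF x hx).le⟩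

def realNetworks (ψ : ℝ → ℝ) (E : Type*) [NormedAddCommGroup E] [NormedSpace ℝ E] :
    Submodule ℝ (E → ℝ) :=
  span ℝ {g | ∃ (L : E →L[ℝ] ℝ) (θ : ℝ), g = fun x => ψ (L x + θ)}

variable {ψ : ℝ → ℝ}

theorem comp_mem_uniformClosureOn_realNetworks (hTW : IsTauberWiener ψ) (hK : IsCompact K)
    {φ : ℝ → ℝ} (hφ : Continuous φ) (L : E →L[ℝ] ℝ) :
    (fun x => φ (L x)) ∈ (realNetworks ψ E).uniformClosureOn K := by
  intro ε hε
  obtain ⟨C, hC⟩ := hK.exists_bound_of_continuousOn L.continuous.continuousOn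
  obtain ⟨M, α, w, θ, hφψ⟩ := hTW φ hφ (-C) C ε hε
  refine ⟨∑ i, α i • fun x => ψ ((w i • L) x + θ i), ?_, fun x hx => ?_⟩
  · exact sum_mem fun i _ => smul_mem _ _ (subset_span ⟨w i • L, θ i, rfl⟩)
  · have := hφψ (L x) (abs_le.1 (hC x hx))
    simpa [abs_sub_comm] using this

theorem continuous_mem_uniformClosureOn_realNetworks (hTW : IsTauberWiener ψ) (hK : IsCompact K)
    {F : E → ℝ} (hF : Continuous F) : F ∈ (realNetworks ψ E).uniformClosureOn K := by
  rw [← uniformClosureOn_uniformClosureOn]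
  refine uniformClosureOn_mono (span_le.2 ?_) (continuous_mem_uniformClosureOn_span_exp hK hF)
  rintro _ ⟨L, rfl⟩
  exact comp_mem_uniformClosureOn_realNetworks hTW hK Real.continuous_exp L

end RealNetworks

namespace Quaternion

theorem exists_re_mul_eq (l : ℍ[ℝ] →ₗ[ℝ] ℝ) : ∃ w : ℍ[ℝ], ∀ q, (w * q).re = l q := by
  let w : ℍ[ℝ] := ⟨l 1, -l ⟨0, 1, 0, 0⟩, -l ⟨0, 0, 1, 0⟩, -l ⟨0, 0, 0, 1⟩⟩
  have : QuaternionAlgebra.reₗ _ _ _ ∘ₗ LinearMap.mulLeft ℝ w = l :=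
    (QuaternionAlgebra.basisOneIJK _ _ _).ext fun c => by
      fin_cases c <;> simp [w, QuaternionAlgebra.basisOneIJK] <;> rfl
  exact ⟨w, LinearMap.congr_fun this⟩

theorem exists_re_sum_mul_eq {ι : Type*} [Fintype ι] (L : (ι → ℍ[ℝ]) →ₗ[ℝ] ℝ) :
    ∃ w : ι → ℍ[ℝ], ∀ x, (∑ j, w j * x j).re = L x := by
  classical
  choose w hw using fun j => exists_re_mul_eq (L ∘ₗ LinearMap.single ℝ (fun _ => ℍ[ℝ]) j)
  refine ⟨w, fun x => ?_⟩
  calc (∑ j, w j * x j).re = ∑ j, (w j * x j).re := map_sum (QuaternionAlgebra.reₗ _ _ _) _ _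
    _ = L (∑ j, Pi.single j (x j)) := by simp [hw]
    _ = L x := by rw [Finset.univ_sum_single]

theorem abs_imI_le_norm (q : ℍ[ℝ]) : |q.imI| ≤ ‖q‖ := by
  rw [← abs_norm q, abs_le_iff_mul_self_le, ← normSq_eq_norm_mul_self, normSq_def']
  nlinarith [sq_nonneg q.re, sq_nonneg q.imJ, sq_nonneg q.imK]

theorem abs_imJ_le_norm (q : ℍ[ℝ]) : |q.imJ| ≤ ‖q‖ := by
  rw [← abs_norm q, abs_le_iff_mul_self_le, ← normSq_eq_norm_mul_self, normSq_def']
  nlinarith [sq_nonneg q.re, sq_nonneg q.imI, sq_nonneg q.imK]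

theorem abs_imK_le_norm (q : ℍ[ℝ]) : |q.imK| ≤ ‖q‖ := by
  rw [← abs_norm q, abs_le_iff_mul_self_le, ← normSq_eq_norm_mul_self, normSq_def']
  nlinarith [sq_nonneg q.re, sq_nonneg q.imI, sq_nonneg q.imJ]

theorem norm_le_abs_re_add_abs_im (q : ℍ[ℝ]) : ‖q‖ ≤ |q.re| + |q.imI| + |q.imJ| + |q.imK| := by
  rw [mul_self_le_mul_self_iff (norm_nonneg q) (by positivity), ← normSq_eq_norm_mul_self,
    normSq_def']
  nlinarith [sq_abs q.re, sq_abs q.imI, sq_abs q.imJ, sq_abs q.imK, abs_nonneg q.re,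
    abs_nonneg q.imI, abs_nonneg q.imJ, abs_nonneg q.imK]

end Quaternion

noncomputable def splitActivation (ψ : ℝ → ℝ) (q : ℍ[ℝ]) : ℍ[ℝ] :=
  ⟨ψ q.re, ψ q.imI, ψ q.imJ, ψ q.imK⟩

theorem norm_splitActivation_sub_coe_le (ψ : ℝ → ℝ) (q : ℍ[ℝ]) :
    ‖splitActivation ψ q - ψ q.re‖ ≤ |ψ q.imI| + |ψ q.imJ| + |ψ q.imK| := by
  have hre : (ψ q.re : ℍ[ℝ]) = (splitActivation ψ q).re := rfl
  rw [hre, Quaternion.sub_re_self]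
  have := Quaternion.norm_le_abs_re_add_abs_im (splitActivation ψ q).im
  rwa [Quaternion.re_im, abs_zero, zero_add] at this

theorem exists_abs_apply_add_le_of_tendsto {ψ : ℝ → ℝ}
    (hlim : Tendsto ψ atBot (nhds 0) ∨ Tendsto ψ atTop (nhds 0)) {η : ℝ} (hη : 0 < η) (C : ℝ) :
    ∃ t, ∀ s, |s| ≤ C → |ψ (s + t)| ≤ η := by
  rcases hlim with h | h
  · obtain ⟨T, hT⟩ := eventually_atBot.1 (Metric.tendsto_nhds.1 h η hη)
    refine ⟨T - C, fun s hs => ?_⟩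
    simpa using (hT _ (by linarith [(abs_le.1 hs).2])).le
  · obtain ⟨T, hT⟩ := eventually_atTop.1 (Metric.tendsto_nhds.1 h η hη)
    refine ⟨T + C, fun s hs => ?_⟩
    simpa using (hT _ (by linarith [(abs_le.1 hs).1])).le

noncomputable def quatNetworks (σ : ℍ[ℝ] → ℍ[ℝ]) (ι : Type*) [Fintype ι] :
    Submodule ℝ ((ι → ℍ[ℝ]) → ℍ[ℝ]) :=
  span ℝ {g | ∃ (α : ℍ[ℝ]) (w : ι → ℍ[ℝ]) (b : ℍ[ℝ]), g = fun x => α * σ (∑ j, w j * x j + b)}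

theorem exists_eq_sum_of_mem_quatNetworks {σ : ℍ[ℝ] → ℍ[ℝ]} {ι : Type*} [Fintype ι]
    {g : (ι → ℍ[ℝ]) → ℍ[ℝ]} (hg : g ∈ quatNetworks σ ι) :
    ∃ (M : ℕ) (α b : Fin M → ℍ[ℝ]) (w : Fin M → ι → ℍ[ℝ]),
      g = fun x => ∑ i, α i * σ (∑ j, w i j * x j + b i) := by
  obtain ⟨M, c, n, rfl⟩ := mem_span_set'.1 hg
  choose α w b hn using fun i => (n i).2
  refine ⟨M, fun i => c i • α i, b, w, ?_⟩
  funext x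
  simp [hn]

section QuatNetworks

variable {ψ : ℝ → ℝ} {ι : Type*} [Fintype ι] {K : Set (ι → ℍ[ℝ])}

theorem smul_mem_uniformClosureOn_quatNetworks
    (hlim : Tendsto ψ atBot (nhds 0) ∨ Tendsto ψ atTop (nhds 0)) (hK : IsCompact K)
    (L : (ι → ℍ[ℝ]) →L[ℝ] ℝ) (θ : ℝ) (e : ℍ[ℝ]) :
    (fun x => ψ (L x + θ) • e) ∈ (quatNetworks (splitActivation ψ) ι).uniformClosureOn K := by
  intro ε hε
  obtain ⟨w, hw⟩ := Quaternion.exists_re_sum_mul_eq (L : (ι → ℍ[ℝ]) →ₗ[ℝ] ℝ)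
  obtain ⟨C, hC⟩ := hK.exists_bound_of_continuousOn (f := fun x => ∑ j, w j * x j) (by fun_prop)
  set η := ε / (3 * ‖e‖ + 1)
  obtain ⟨t, ht⟩ := exists_abs_apply_add_le_of_tendsto hlim (η := η) (by positivity) C
  refine ⟨_, subset_span ⟨e, w, ⟨θ, t, t, t⟩, rfl⟩, fun x hx => ?_⟩
  set u := ∑ j, w j * x j
  have hu := hC x hx
  set q : ℍ[ℝ] := u + ⟨θ, t, t, t⟩
  have hq : q.re = L x + θ := congrArg (· + θ) (hw x)
  have hi : |ψ q.imI| ≤ η := ht _ ((Quaternion.abs_imI_le_norm u).trans hu)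
  have hj : |ψ q.imJ| ≤ η := ht _ ((Quaternion.abs_imJ_le_norm u).trans hu)
  have hk : |ψ q.imK| ≤ η := ht _ ((Quaternion.abs_imK_le_norm u).trans hu)
  calc ‖e * splitActivation ψ q - ψ (L x + θ) • e‖
      = ‖e‖ * ‖splitActivation ψ q - ψ q.re‖ := by
        rw [hq, ← norm_mul, mul_sub, Quaternion.mul_coe_eq_smul]
    _ ≤ ‖e‖ * (3 * η) := by
        gcongr
        linarith [norm_splitActivation_sub_coe_le ψ q]
    _ = 3 * ‖e‖ * η := by ring
    _ ≤ ε := mul_div_add_one_le (by positivity) hε.le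

theorem realNetworks_map_le_uniformClosureOn_quatNetworks
    (hlim : Tendsto ψ atBot (nhds 0) ∨ Tendsto ψ atTop (nhds 0)) (hK : IsCompact K) (e : ℍ[ℝ]) :
    (realNetworks ψ (ι → ℍ[ℝ])).map
        ((ContinuousLinearMap.toSpanSingleton ℝ e : ℝ →ₗ[ℝ] ℍ[ℝ]).compLeft _) ≤
      (quatNetworks (splitActivation ψ) ι).uniformClosureOn K := by
  refine map_le_iff_le_comap.2 (span_le.2 ?_)
  rintro _ ⟨L, θ, rfl⟩
  exact smul_mem_uniformClosureOn_quatNetworks hlim hK L θ e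

theorem continuous_mem_uniformClosureOn_quatNetworks (hTW : IsTauberWiener ψ)
    (hlim : Tendsto ψ atBot (nhds 0) ∨ Tendsto ψ atTop (nhds 0)) (hK : IsCompact K)
    {f : (ι → ℍ[ℝ]) → ℍ[ℝ]} (hf : Continuous f) :
    f ∈ (quatNetworks (splitActivation ψ) ι).uniformClosureOn K := by
  refine continuous_mem_of_forall_smul_mem (fun φ hφ e => ?_) hf
  rw [← uniformClosureOn_uniformClosureOn]
  exact uniformClosureOn_mono (realNetworks_map_le_uniformClosureOn_quatNetworks hlim hK e)
    (comp_mem_uniformClosureOn_map (.toSpanSingleton ℝ e)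
      (continuous_mem_uniformClosureOn_realNetworks hTW hK hφ))

end QuatNetworks

theorem universal_approximation_quaternion_MLP_general
    (ψ : ℝ → ℝ) (hTW : IsTauberWiener ψ)
    (hlim : Tendsto ψ atBot (nhds 0) ∨ Tendsto ψ atTop (nhds 0))
    (ψH : Quaternion ℝ → Quaternion ℝ)
    (hψH : ∀ q : Quaternion ℝ,
      (ψH q).re = ψ q.re ∧ (ψH q).imI = ψ q.imI ∧
      (ψH q).imJ = ψ q.imJ ∧ (ψH q).imK = ψ q.imK)
    (N : ℕ)
    (K : Set (Fin N → Quaternion ℝ)) (hK : IsCompact K)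
    (f : (Fin N → Quaternion ℝ) → Quaternion ℝ) (hf : Continuous f)
    (ε : ℝ) (hε : 0 < ε) :
    ∃ M : ℕ, ∃ α b : Fin M → Quaternion ℝ, ∃ w : Fin M → Fin N → Quaternion ℝ,
      ∀ x ∈ K,
        ‖(∑ i, α i * ψH ((∑ j, w i j * x j) + b i)) - f x‖ ≤ ε := by
  obtain rfl : ψH = splitActivation ψ := funext fun q => by
    obtain ⟨h₁, h₂, h₃, h₄⟩ := hψH q
    ext <;> assumption
  obtain ⟨g, hg, hgf⟩ := continuous_mem_uniformClosureOn_quatNetworks hTW hlim hK hf ε hε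
  obtain ⟨M, α, b, w, rfl⟩ := exists_eq_sum_of_mem_quatNetworks hg
  exact ⟨M, α, b, w, hgf⟩

/-- Universal approximation for quaternion-valued MLP networks with split activation. -/
theorem universal_approximation_quaternion_MLP
    (ψ : ℝ → ℝ) (hTW : IsTauberWiener ψ)
    (hlim : Tendsto ψ atBot (nhds 0) ∨ Tendsto ψ atTop (nhds 0))
    (ψH : Quaternion ℝ → Quaternion ℝ)
    (hψH : ∀ q : Quaternion ℝ,
      (ψH q).re = ψ q.re ∧ (ψH q).imI = ψ q.imI ∧
      (ψH q).imJ = ψ q.imJ ∧ (ψH q).imK = ψ q.imK)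
    (N : ℕ) (hN : 1 ≤ N)
    (K : Set (Fin N → Quaternion ℝ)) (hK : IsCompact K)
    (f : (Fin N → Quaternion ℝ) → Quaternion ℝ) (hf : Continuous f)
    (ε : ℝ) (hε : 0 < ε) :
    ∃ M : ℕ, ∃ α b : Fin M → Quaternion ℝ, ∃ w : Fin M → Fin N → Quaternion ℝ,
      ∀ x ∈ K,
        ‖(∑ i, α i * ψH ((∑ j, w i j * x j) + b i)) - f x‖ ≤ ε :=
  universal_approximation_quaternion_MLP_general ψ hTW hlim ψH hψH N K hK f hf ε hε
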